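/- arXiv:2404.00774 — 2 statements merged into one kernel-verified Lean document; each statement's English description precedes it below -/
import Mathlib

section
/- Let q be uniformly distributed on the unit hypersphere in R^d (d ≥ 2), let r ∈ R^d be a fixed unit vector, and r' ∈ R^d fixed. Decompose r' = r'_∥ + r'_⊥ into components parallel and orthogonal to r. Then the conditional expectation of ⟨q, r'⟩² given ⟨q, r⟩ = cos θ equals cos²θ·‖r'_∥‖² + sin²θ·‖r'_⊥‖²/(d−1). -/
/-!
Write `q = cos θ • r + sin θ • u` with `u ⊥ r`, so that
`⟪q, r'⟫ = cos θ ⟪r, r'⟫ + sin θ ⟪u, w⟫` with `w = r'_⊥`, and only the first two moments of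
`⟪u, w⟫` matter. The reflection in the line `ℝ ∙ r` fixes `r` and negates `u`, so the first
moment vanishes. The reflection exchanging two vectors of `rᗮ` of equal norm fixes `r`, so
`∫ ⟪u, w⟫²` depends only on `‖w‖` and equals `c ‖w‖²`; summing over an orthonormal basis of
`rᗮ` gives `(d - 1) c = ∫ ‖u‖² = 1`.
-/

open MeasureTheory
open scoped RealInnerProductSpace

theorem integral_const_add_mul_sq {α : Type*} [MeasurableSpace α] {μ : Measure α}
    [IsProbabilityMeasure μ] {f : α → ℝ} (hf : Integrable f μ)
    (hf2 : Integrable (fun x => f x ^ 2) μ) (a b : ℝ) :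
    ∫ x, (a + b * f x) ^ 2 ∂μ = a ^ 2 + 2 * a * b * ∫ x, f x ∂μ + b ^ 2 * ∫ x, f x ^ 2 ∂μ := by
  have hexpand : ∀ x, (a + b * f x) ^ 2 = a ^ 2 + (2 * a * b * f x + b ^ 2 * f x ^ 2) :=
    fun x => by ring
  have hg : Integrable (fun x => 2 * a * b * f x + b ^ 2 * f x ^ 2) μ :=
    (hf.const_mul _).add (hf2.const_mul _)
  simp_rw [hexpand]
  rw [integral_add (integrable_const _) hg,
    integral_add (hf.const_mul _) (hf2.const_mul _), integral_const_mul, integral_const_mul,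
    integral_const, probReal_univ, one_smul]
  ring

section

variable {E : Type*} [NormedAddCommGroup E] [InnerProductSpace ℝ E]

theorem Submodule.sum_sq_inner_of_mem {ι : Type*} [Fintype ι] {K : Submodule ℝ E}
    (b : OrthonormalBasis ι ℝ K) {u : E} (hu : u ∈ K) :
    ∑ i, ⟪u, (b i : E)⟫ ^ 2 = ‖u‖ ^ 2 :=
  b.sum_sq_inner_left ⟨u, hu⟩

variable [MeasurableSpace E] [BorelSpace E] {ν : Measure E}

theorem integrable_inner_of_norm_le_one [IsFiniteMeasure ν] (hν : ∀ᵐ u ∂ν, ‖u‖ ≤ 1) (v : E) :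
    Integrable (fun u => ⟪u, v⟫) ν :=
  .of_bound (by fun_prop) ‖v‖ <| hν.mono fun u hu =>
    (norm_inner_le_norm u v).trans (mul_le_of_le_one_left (norm_nonneg v) hu)

theorem integrable_inner_sq_of_norm_le_one [IsFiniteMeasure ν] (hν : ∀ᵐ u ∂ν, ‖u‖ ≤ 1) (v : E) :
    Integrable (fun u => ⟪u, v⟫ ^ 2) ν :=
  .of_bound (by fun_prop) (‖v‖ ^ 2) <| hν.mono fun u hu => by
    rw [norm_pow]
    gcongr
    exact (norm_inner_le_norm u v).trans (mul_le_of_le_one_left (norm_nonneg v) hu)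

def StabilizerInvariant (ν : Measure E) (r : E) : Prop :=
  ∀ O : E ≃ₗᵢ[ℝ] E, O r = r → Measure.map O ν = ν

namespace StabilizerInvariant

variable {r : E}

theorem integral_comp {G : Type*} [NormedAddCommGroup G] [NormedSpace ℝ G]
    (h : StabilizerInvariant ν r) {O : E ≃ₗᵢ[ℝ] E} (hO : O r = r) (f : E → G) :
    ∫ u, f (O u) ∂ν = ∫ u, f u ∂ν := by
  have := integral_map_equiv (μ := ν) O.toHomeomorph.toMeasurableEquiv f
  rw [Homeomorph.toMeasurableEquiv_coe, LinearIsometryEquiv.coe_toHomeomorph, h O hO] at this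
  exact this.symm

theorem integral_inner_eq_zero (h : StabilizerInvariant ν r)
    (hsupp : ∀ᵐ u ∂ν, ⟪u, r⟫ = 0) (v : E) : ∫ u, ⟪u, v⟫ ∂ν = 0 := by
  have hfix : (ℝ ∙ r).reflection r = r :=
    Submodule.reflection_mem_subspace_eq_self (Submodule.mem_span_singleton_self r)
  have hflip : ∫ u, ⟪(ℝ ∙ r).reflection u, v⟫ ∂ν = -∫ u, ⟪u, v⟫ ∂ν := by
    rw [← integral_neg]
    refine integral_congr_ae (hsupp.mono fun u hu => ?_)
    beta_reduce
    rw [Submodule.reflection_mem_subspace_orthogonalComplement_eq_neg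
      (Submodule.mem_orthogonal_singleton_iff_inner_left.2 hu), inner_neg_left]
  linarith [h.integral_comp hfix fun u => ⟪u, v⟫]

theorem integral_inner_sq_eq_of_norm_eq (h : StabilizerInvariant ν r) {v w : E}
    (hv : ⟪v, r⟫ = 0) (hw : ⟪w, r⟫ = 0) (hvw : ‖v‖ = ‖w‖) :
    ∫ u, ⟪u, v⟫ ^ 2 ∂ν = ∫ u, ⟪u, w⟫ ^ 2 ∂ν := by
  have hfix : (ℝ ∙ (v - w))ᗮ.reflection r = r :=
    Submodule.reflection_mem_subspace_eq_self <|
      Submodule.mem_orthogonal_singleton_iff_inner_right.2 <| by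
        rw [inner_sub_left, hv, hw, sub_zero]
  calc ∫ u, ⟪u, v⟫ ^ 2 ∂ν = ∫ u, ⟪(ℝ ∙ (v - w))ᗮ.reflection u, v⟫ ^ 2 ∂ν :=
        (h.integral_comp hfix fun u => ⟪u, v⟫ ^ 2).symm
    _ = ∫ u, ⟪u, w⟫ ^ 2 ∂ν := by
      simp_rw [LinearIsometryEquiv.inner_map_eq_flip, Submodule.reflection_symm,
        Submodule.reflection_sub hvw]

theorem integral_inner_sq_of_inner_eq_zero [FiniteDimensional ℝ E] [IsProbabilityMeasure ν]
    (h : StabilizerInvariant ν r)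
    (hsupp : ∀ᵐ u ∂ν, ‖u‖ = 1 ∧ ⟪u, r⟫ = 0) {w : E} (hw : ⟪w, r⟫ = 0) :
    ∫ u, ⟪u, w⟫ ^ 2 ∂ν = ‖w‖ ^ 2 / Module.finrank ℝ (ℝ ∙ r)ᗮ := by
  set n := Module.finrank ℝ (ℝ ∙ r)ᗮ
  set b := stdOrthonormalBasis ℝ (ℝ ∙ r)ᗮ
  have hb : ∀ i, ⟪(b i : E), r⟫ = 0 := fun i =>
    Submodule.mem_orthogonal_singleton_iff_inner_left.1 (b i).2
  have hscale : ∀ i, ∫ u, ⟪u, w⟫ ^ 2 ∂ν = ‖w‖ ^ 2 * ∫ u, ⟪u, (b i : E)⟫ ^ 2 ∂ν := fun i => by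
    have hnorm : ‖w‖ = ‖‖w‖ • (b i : E)‖ := by
      rw [norm_smul, norm_norm, Submodule.norm_coe, b.norm_eq_one, mul_one]
    rw [h.integral_inner_sq_eq_of_norm_eq hw (by rw [inner_smul_left, hb, mul_zero]) hnorm,
      ← integral_const_mul]
    simp_rw [real_inner_smul_right, mul_pow]
  have htrace : ∑ i, ∫ u, ⟪u, (b i : E)⟫ ^ 2 ∂ν = 1 := by
    calc ∑ i, ∫ u, ⟪u, (b i : E)⟫ ^ 2 ∂ν = ∫ u, ∑ i, ⟪u, (b i : E)⟫ ^ 2 ∂ν :=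
          (integral_finsetSum _ fun i _ =>
            integrable_inner_sq_of_norm_le_one (hsupp.mono fun u hu => hu.1.le) _).symm
      _ = ∫ _, 1 ∂ν := integral_congr_ae (hsupp.mono fun u hu => ?_)
      _ = 1 := by simp
    beta_reduce
    rw [Submodule.sum_sq_inner_of_mem b (Submodule.mem_orthogonal_singleton_iff_inner_left.2 hu.2),
      hu.1, one_pow]
  have hn : (n : ℝ) ≠ 0 := by
    intro hn0
    have : IsEmpty (Fin n) := by rw [Nat.cast_eq_zero.1 hn0]; infer_instance
    rw [Fintype.sum_empty] at htrace
    exact zero_ne_one htrace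
  rw [eq_div_iff hn]
  calc (∫ u, ⟪u, w⟫ ^ 2 ∂ν) * n = ∑ i, ‖w‖ ^ 2 * ∫ u, ⟪u, (b i : E)⟫ ^ 2 ∂ν := by
        rw [Finset.sum_congr rfl fun i _ => (hscale i).symm, Finset.sum_const, Finset.card_univ,
          Fintype.card_fin, nsmul_eq_mul, mul_comm]
    _ = ‖w‖ ^ 2 := by rw [← Finset.mul_sum, htrace, mul_one]

end StabilizerInvariant

end

theorem conditional_expectation_inner_sq_sphere_general
    (d : ℕ)
    (r r' : EuclideanSpace ℝ (Fin d)) (hr : ‖r‖ = 1) (θ : ℝ)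
    (ν : Measure (EuclideanSpace ℝ (Fin d))) [IsProbabilityMeasure ν]
    (hsupp : ∀ᵐ u ∂ν, ‖u‖ = 1 ∧ ⟪u, r⟫ = 0)
    (hrot : ∀ O : EuclideanSpace ℝ (Fin d) ≃ₗᵢ[ℝ] EuclideanSpace ℝ (Fin d),
      O r = r → Measure.map O ν = ν) :
    ∫ u, ⟪Real.cos θ • r + Real.sin θ • u, r'⟫ ^ 2 ∂ν
      = Real.cos θ ^ 2 * ‖((ℝ ∙ r).orthogonalProjectionOnto r' : EuclideanSpace ℝ (Fin d))‖ ^ 2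
        + Real.sin θ ^ 2 *
            ‖r' - ((ℝ ∙ r).orthogonalProjectionOnto r' : EuclideanSpace ℝ (Fin d))‖ ^ 2
            / ((d : ℝ) - 1) := by
  have hproj : ((ℝ ∙ r).orthogonalProjectionOnto r' : EuclideanSpace ℝ (Fin d)) = ⟪r, r'⟫ • r := by
    rw [← Submodule.starProjection_apply, Submodule.starProjection_singleton, hr]
    simp
  have hperp : ⟪r' - ⟪r, r'⟫ • r, r⟫ = 0 := by
    rw [inner_sub_left, real_inner_smul_left, real_inner_self_eq_norm_sq, hr, real_inner_comm]
    ring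
  have hdim : (Module.finrank ℝ (ℝ ∙ r)ᗮ : ℝ) = d - 1 := by
    have := (ℝ ∙ r).finrank_add_finrank_orthogonal
    rw [finrank_span_singleton (norm_ne_zero_iff.1 (hr ▸ one_ne_zero)),
      finrank_euclideanSpace_fin] at this
    rw [eq_sub_iff_add_eq, add_comm]
    exact_mod_cast this
  have hinner : ∀ᵐ u ∂ν, ⟪Real.cos θ • r + Real.sin θ • u, r'⟫ ^ 2
      = (Real.cos θ * ⟪r, r'⟫ + Real.sin θ * ⟪u, r' - ⟪r, r'⟫ • r⟫) ^ 2 := hsupp.mono fun u hu => by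
    rw [inner_add_left, real_inner_smul_left, real_inner_smul_left, inner_sub_right,
      real_inner_smul_right, hu.2, mul_zero, sub_zero]
  have hbound : ∀ᵐ u ∂ν, ‖u‖ ≤ 1 := hsupp.mono fun u hu => hu.1.le
  have hinv : StabilizerInvariant ν r := hrot
  rw [integral_congr_ae hinner, integral_const_add_mul_sq
      (integrable_inner_of_norm_le_one hbound _) (integrable_inner_sq_of_norm_le_one hbound _),
    hinv.integral_inner_eq_zero (hsupp.mono fun u hu => hu.2),
    hinv.integral_inner_sq_of_inner_eq_zero hsupp hperp, hdim, hproj,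
    norm_smul, hr, Real.norm_eq_abs, mul_one, sq_abs]
  ring

/-- For `q` uniform on the subsphere `{q ∈ S^{d-1} : ⟪q,r⟫ = cos θ}` — modeled as
`q = cos θ • r + sin θ • u` with `u` uniform on the unit sphere of the orthogonal
complement of `r` — the conditional expectation of `⟪q,r'⟫²` equals
`cos²θ ‖r'_∥‖² + sin²θ ‖r'_⊥‖²/(d−1)`. -/
theorem conditional_expectation_inner_sq_sphere
    (d : ℕ) (hd : 2 ≤ d)
    (r r' : EuclideanSpace ℝ (Fin d)) (hr : ‖r‖ = 1) (θ : ℝ)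
    (ν : Measure (EuclideanSpace ℝ (Fin d))) [IsProbabilityMeasure ν]
    (hsupp : ∀ᵐ u ∂ν, ‖u‖ = 1 ∧ ⟪u, r⟫ = 0)
    (hrot : ∀ O : EuclideanSpace ℝ (Fin d) ≃ₗᵢ[ℝ] EuclideanSpace ℝ (Fin d),
      O r = r → Measure.map O ν = ν) :
    ∫ u, ⟪Real.cos θ • r + Real.sin θ • u, r'⟫ ^ 2 ∂ν
      = Real.cos θ ^ 2 * ‖((ℝ ∙ r).orthogonalProjectionOnto r' : EuclideanSpace ℝ (Fin d))‖ ^ 2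
        + Real.sin θ ^ 2 *
            ‖r' - ((ℝ ∙ r).orthogonalProjectionOnto r' : EuclideanSpace ℝ (Fin d))‖ ^ 2
            / ((d : ℝ) - 1) :=
  conditional_expectation_inner_sq_sphere_general d r r' hr θ ν hsupp hrot
end

section
/- Let q be uniformly distributed on the unit sphere in R^d (d ≥ 2), let r ∈ R^d be a fixed nonzero vector and r' ∈ R^d. For the weight function w(t) = |t|^λ with λ ≥ 0, define L(r', r) = E[ w(⟨q,r⟩/‖r‖) · ⟨q,r'⟩² ]. Then there exists a constant C > 0 depending only on d and λ (not on r or r') such that L(r', r) = C · (‖r'‖² + λ‖proj_r r'‖²). -/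
/-!
Write `r' = a u + v` with `u = r / ‖r‖` and `v ⟂ u`. The isometry fixing `u` and negating `v` kills
the cross term, so the loss is `a² A + B(v)` with `A = E |⟪q, u⟫|^λ ⟪q, u⟫²`, which by invariance
does not depend on the unit vector `u`, and `B(v) = E |⟪q, u⟫|^λ ⟪q, v⟫²`. The identity
`A = (λ + 1) B(w)` for a unit `w ⟂ u` comes from rotating `q` in the `(u, w)`-plane: every rotated
integrand has the same expectation, while for fixed `q` the integrand
`|X|^λ X² - (λ + 1) |X|^λ Y²` is the `θ`-derivative of the periodic function `|X|^λ X Y`, so its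
integral over a full turn vanishes. Hence the loss is `A / (λ + 1) (‖r'‖² + λ a²)`, and `A > 0`
since otherwise every coordinate of `q` would vanish almost surely.
-/

open MeasureTheory Real
open scoped RealInnerProductSpace

theorem hasDerivAt_abs_rpow_mul_self {p : ℝ} (hp : 0 ≤ p) (t : ℝ) :
    HasDerivAt (fun t : ℝ => |t| ^ p * t) ((p + 1) * |t| ^ p) t := by
  have hcont : Continuous fun t : ℝ => |t| ^ p := continuous_abs.rpow_const fun _ => Or.inr hp
  refine hasDerivAt_of_hasDerivAt_of_ne' (x := 0) (g := fun t => (p + 1) * |t| ^ p)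
    (fun s hs => ?_) (hcont.mul continuous_id).continuousAt
    (continuous_const.mul hcont).continuousAt t
  have hs' : |s| ≠ 0 := abs_ne_zero.mpr hs
  refine (((hasDerivAt_abs hs).rpow_const (Or.inl hs')).mul (hasDerivAt_id s)).congr_deriv ?_
  rw [id, Real.rpow_sub_one hs']
  field_simp
  linear_combination p * sign_mul_self s

theorem integral_rotate_abs_rpow_mul_sq_sub_eq_zero {p : ℝ} (hp : 0 ≤ p) (x y : ℝ) :
    ∫ θ in (0)..(2 * π), (|cos θ * x - sin θ * y| ^ p * (cos θ * x - sin θ * y) ^ 2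
      - (p + 1) * (|cos θ * x - sin θ * y| ^ p * (sin θ * x + cos θ * y) ^ 2)) = 0 := by
  have hX (θ : ℝ) : HasDerivAt (fun θ => cos θ * x - sin θ * y) (-(sin θ * x + cos θ * y)) θ :=
    (((hasDerivAt_cos θ).mul_const x).sub ((hasDerivAt_sin θ).mul_const y)).congr_deriv (by ring)
  have hY (θ : ℝ) : HasDerivAt (fun θ => sin θ * x + cos θ * y) (cos θ * x - sin θ * y) θ :=
    (((hasDerivAt_sin θ).mul_const x).add ((hasDerivAt_cos θ).mul_const y)).congr_deriv (by ring)
  have hderiv (θ : ℝ) : HasDerivAt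
      (fun θ => |cos θ * x - sin θ * y| ^ p * (cos θ * x - sin θ * y) * (sin θ * x + cos θ * y))
      (|cos θ * x - sin θ * y| ^ p * (cos θ * x - sin θ * y) ^ 2
        - (p + 1) * (|cos θ * x - sin θ * y| ^ p * (sin θ * x + cos θ * y) ^ 2)) θ :=
    (((hasDerivAt_abs_rpow_mul_self hp _).comp θ (hX θ)).mul (hY θ)).congr_deriv (by
      simp only [Function.comp_apply]; ring)
  have hcont : Continuous fun θ => |cos θ * x - sin θ * y| ^ p * (cos θ * x - sin θ * y) ^ 2
        - (p + 1) * (|cos θ * x - sin θ * y| ^ p * (sin θ * x + cos θ * y) ^ 2) := by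
    fun_prop (disch := exact fun _ => Or.inr hp)
  rw [intervalIntegral.integral_eq_sub_of_hasDerivAt (fun θ _ => hderiv θ)
    (hcont.intervalIntegrable _ _)]
  simp

section Isometry

variable {F : Type*} [NormedAddCommGroup F] [InnerProductSpace ℝ F]

theorem LinearIsometryEquiv.exists_apply_eq_of_norm_eq {x y : F} (h : ‖x‖ = ‖y‖) :
    ∃ O : F ≃ₗᵢ[ℝ] F, O x = y :=
  ⟨Submodule.reflection (ℝ ∙ (x - y))ᗮ, Submodule.reflection_sub h⟩

theorem LinearIsometryEquiv.exists_apply_eq_apply_eq {u w u' w' : F} (hu : ‖u‖ = ‖u'‖)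
    (hw : ‖w‖ = ‖w'‖) (huw : ⟪u, w⟫ = ⟪u', w'⟫) :
    ∃ O : F ≃ₗᵢ[ℝ] F, O u = u' ∧ O w = w' := by
  obtain ⟨R, hR⟩ := exists_apply_eq_of_norm_eq hu
  have hRw : ‖R w‖ = ‖w'‖ := by rw [R.norm_map, hw]
  refine ⟨R.trans (Submodule.reflection (ℝ ∙ (R w - w'))ᗮ), ?_, Submodule.reflection_sub hRw⟩
  have hperp : ⟪R w - w', u'⟫ = 0 := by
    rw [inner_sub_left, ← hR, R.inner_map_map, hR, real_inner_comm u, real_inner_comm u', huw,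
      sub_self]
  simp only [LinearIsometryEquiv.trans_apply, hR]
  exact Submodule.reflection_mem_subspace_eq_self
    (Submodule.mem_orthogonal_singleton_iff_inner_right.mpr hperp)

end Isometry

theorem Continuous.integrable_of_ae_mem_isCompact {X E : Type*} [TopologicalSpace X] [T2Space X]
    [MeasurableSpace X] [OpensMeasurableSpace X] [NormedAddCommGroup E] {μ : Measure X}
    [IsFiniteMeasureOnCompacts μ] {K : Set X} (hK : IsCompact K) (hμK : ∀ᵐ x ∂μ, x ∈ K)
    {g : X → E} (hg : Continuous g) : Integrable g μ := by
  rw [← Measure.restrict_eq_self_of_ae_mem hμK]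
  exact hg.continuousOn.integrableOn_compact hK

section InvariantMeasure

variable {F : Type*} [NormedAddCommGroup F] [InnerProductSpace ℝ F] [MeasurableSpace F]
  [BorelSpace F] {μ : Measure F}

theorem integral_inner_inner_eq_of_map_eq (hrot : ∀ O : F ≃ₗᵢ[ℝ] F, μ.map O = μ)
    (g : ℝ → ℝ → ℝ) {u w u' w' : F} (hu : ‖u‖ = ‖u'‖) (hw : ‖w‖ = ‖w'‖)
    (huw : ⟪u, w⟫ = ⟪u', w'⟫) :
    ∫ q, g ⟪q, u⟫ ⟪q, w⟫ ∂μ = ∫ q, g ⟪q, u'⟫ ⟪q, w'⟫ ∂μ := by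
  obtain ⟨O, hOu, hOw⟩ := LinearIsometryEquiv.exists_apply_eq_apply_eq hu hw huw
  have hO : MeasurePreserving O.toHomeomorph.toMeasurableEquiv μ μ :=
    ⟨O.continuous.measurable, hrot O⟩
  rw [← hO.integral_comp' (fun q => g ⟪q, u'⟫ ⟪q, w'⟫)]
  simp [← hOu, ← hOw]

theorem integral_comp_inner_eq_of_map_eq (hrot : ∀ O : F ≃ₗᵢ[ℝ] F, μ.map O = μ) (g : ℝ → ℝ)
    {u u' : F} (hu : ‖u‖ = ‖u'‖) :
    ∫ q, g ⟪q, u⟫ ∂μ = ∫ q, g ⟪q, u'⟫ ∂μ :=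
  integral_inner_inner_eq_of_map_eq hrot (fun x _ => g x) (w := 0) (w' := 0) hu rfl (by simp)

theorem integral_abs_rpow_inner_mul_inner_mul_inner_eq_zero
    (hrot : ∀ O : F ≃ₗᵢ[ℝ] F, μ.map O = μ) (p : ℝ) {u v : F} (huv : ⟪u, v⟫ = 0) :
    ∫ q, |⟪q, u⟫| ^ p * (⟪q, u⟫ * ⟪q, v⟫) ∂μ = 0 := by
  have h := integral_inner_inner_eq_of_map_eq hrot (fun x y => |x| ^ p * (x * y)) rfl
    (norm_neg v).symm (by rw [inner_neg_right, huv, neg_zero])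
  simp only [inner_neg_right, mul_neg, integral_neg] at h
  linarith

theorem integral_rotate_inner_inner_eq_of_map_eq (hrot : ∀ O : F ≃ₗᵢ[ℝ] F, μ.map O = μ)
    (g : ℝ → ℝ → ℝ) {u w : F} (hw : ‖w‖ = ‖u‖) (huw : ⟪u, w⟫ = 0) (θ : ℝ) :
    ∫ q, g (cos θ * ⟪q, u⟫ - sin θ * ⟪q, w⟫) (sin θ * ⟪q, u⟫ + cos θ * ⟪q, w⟫) ∂μ
      = ∫ q, g ⟪q, u⟫ ⟪q, w⟫ ∂μ := by
  have hnorm {a b : ℝ} (hab : a ^ 2 + b ^ 2 = 1) : ‖u‖ = ‖a • u + b • w‖ := by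
    rw [← sq_eq_sq₀ (norm_nonneg _) (norm_nonneg _), norm_add_sq_real, norm_smul, norm_smul,
      real_inner_smul_left, real_inner_smul_right, huw, hw, mul_pow, mul_pow, Real.norm_eq_abs,
      Real.norm_eq_abs, sq_abs, sq_abs]
    linear_combination -‖u‖ ^ 2 * hab
  have hinner : ⟪u, w⟫ = ⟪cos θ • u + (-sin θ) • w, sin θ • u + cos θ • w⟫ := by
    simp only [inner_add_left, inner_add_right, real_inner_smul_left, real_inner_smul_right,
      real_inner_self_eq_norm_sq, hw, huw, real_inner_comm u w]
    ring
  rw [integral_inner_inner_eq_of_map_eq hrot g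
    (hnorm (b := -sin θ) (by rw [neg_sq]; exact cos_sq_add_sin_sq θ))
    (hw.trans (hnorm (sin_sq_add_cos_sq θ))) hinner]
  simp only [inner_add_right, real_inner_smul_right, neg_mul]
  rfl

variable [FiniteDimensional ℝ F] [IsFiniteMeasure μ]

theorem Continuous.integrable_of_ae_norm_eq_one {g : F → ℝ} (hg : Continuous g)
    (hsphere : ∀ᵐ q ∂μ, ‖q‖ = 1) : Integrable g μ :=
  hg.integrable_of_ae_mem_isCompact (isCompact_sphere 0 1) (by simpa using hsphere)

theorem integral_abs_rpow_inner_mul_sq_eq_mul {p : ℝ} (hp : 0 ≤ p) (hsphere : ∀ᵐ q ∂μ, ‖q‖ = 1)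
    (hrot : ∀ O : F ≃ₗᵢ[ℝ] F, μ.map O = μ) {u w : F} (hw : ‖w‖ = ‖u‖) (huw : ⟪u, w⟫ = 0) :
    ∫ q, |⟪q, u⟫| ^ p * ⟪q, u⟫ ^ 2 ∂μ = (p + 1) * ∫ q, |⟪q, u⟫| ^ p * ⟪q, w⟫ ^ 2 ∂μ := by
  set g : ℝ → ℝ → ℝ := fun x y => |x| ^ p * x ^ 2 - (p + 1) * (|x| ^ p * y ^ 2) with hg
  have hcont : Continuous fun z : ℝ × F =>
      g (cos z.1 * ⟪z.2, u⟫ - sin z.1 * ⟪z.2, w⟫) (sin z.1 * ⟪z.2, u⟫ + cos z.1 * ⟪z.2, w⟫) := by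
    simp only [hg]
    fun_prop (disch := exact fun _ => Or.inr hp)
  have hmem : ∀ᵐ z ∂(volume.restrict (Set.uIoc 0 (2 * π))).prod μ,
      z ∈ Set.uIcc 0 (2 * π) ×ˢ Metric.sphere (0 : F) 1 := by
    filter_upwards [Measure.quasiMeasurePreserving_fst.ae
        (ae_restrict_mem measurableSet_uIoc), Measure.quasiMeasurePreserving_snd.ae hsphere]
      with z hz1 hz2
    exact ⟨Set.uIoc_subset_uIcc hz1, by simpa using hz2⟩
  have hzero : 2 * π * ∫ q, g ⟪q, u⟫ ⟪q, w⟫ ∂μ = 0 := calc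
    2 * π * ∫ q, g ⟪q, u⟫ ⟪q, w⟫ ∂μ
      = ∫ θ in (0)..(2 * π), ∫ q, g (cos θ * ⟪q, u⟫ - sin θ * ⟪q, w⟫)
          (sin θ * ⟪q, u⟫ + cos θ * ⟪q, w⟫) ∂μ := by
        simp [integral_rotate_inner_inner_eq_of_map_eq hrot g hw huw]
    _ = ∫ q, (∫ θ in (0)..(2 * π), g (cos θ * ⟪q, u⟫ - sin θ * ⟪q, w⟫)
          (sin θ * ⟪q, u⟫ + cos θ * ⟪q, w⟫)) ∂μ :=
      intervalIntegral_integral_swap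
        (hcont.integrable_of_ae_mem_isCompact (isCompact_uIcc.prod (isCompact_sphere 0 1)) hmem)
    _ = 0 := by simp [hg, integral_rotate_abs_rpow_mul_sq_sub_eq_zero hp]
  have hint {v : F} : Integrable (fun q => |⟪q, u⟫| ^ p * ⟪q, v⟫ ^ 2) μ :=
    Continuous.integrable_of_ae_norm_eq_one
      (by fun_prop (disch := exact fun _ => Or.inr hp)) hsphere
  rw [← sub_eq_zero, ← integral_const_mul, ← integral_sub hint (hint.const_mul _)]
  simpa [pi_ne_zero] using hzero

theorem integral_abs_rpow_inner_mul_inner_sq_of_inner_eq_zero {p : ℝ} (hp : 0 ≤ p)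
    (hsphere : ∀ᵐ q ∂μ, ‖q‖ = 1) (hrot : ∀ O : F ≃ₗᵢ[ℝ] F, μ.map O = μ) {u v : F}
    (hu : ‖u‖ = 1) (huv : ⟪u, v⟫ = 0) :
    ∫ q, |⟪q, u⟫| ^ p * ⟪q, v⟫ ^ 2 ∂μ
      = ‖v‖ ^ 2 * ((∫ q, |⟪q, u⟫| ^ p * ⟪q, u⟫ ^ 2 ∂μ) / (p + 1)) := by
  rcases eq_or_ne v 0 with rfl | hv
  · simp
  set w := ‖v‖⁻¹ • v
  have hqv (q : F) : ⟪q, v⟫ = ‖v‖ * ⟪q, w⟫ := by simp [w, real_inner_smul_right, hv]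
  have hkey := integral_abs_rpow_inner_mul_sq_eq_mul hp hsphere hrot (u := u) (w := w)
    (by simp [w, norm_smul, hv, hu]) (by simp [w, real_inner_smul_right, huv])
  rw [hkey, mul_div_cancel_left₀ _ (by linarith), ← integral_const_mul]
  congr 1 with q
  rw [hqv]
  ring

theorem integral_abs_rpow_inner_mul_inner_sq {p : ℝ} (hp : 0 ≤ p) (hsphere : ∀ᵐ q ∂μ, ‖q‖ = 1)
    (hrot : ∀ O : F ≃ₗᵢ[ℝ] F, μ.map O = μ) {u : F} (hu : ‖u‖ = 1) (r : F) :
    ∫ q, |⟪q, u⟫| ^ p * ⟪q, r⟫ ^ 2 ∂μ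
      = (∫ q, |⟪q, u⟫| ^ p * ⟪q, u⟫ ^ 2 ∂μ) / (p + 1) * (‖r‖ ^ 2 + p * ⟪u, r⟫ ^ 2) := by
  set a := ⟪u, r⟫
  set v := r - a • u
  have huv : ⟪u, v⟫ = 0 := by
    simp [v, inner_sub_right, real_inner_smul_right, hu, a]
  have hr : r = a • u + v := by simp [v]
  have hnorm : ‖r‖ ^ 2 = a ^ 2 + ‖v‖ ^ 2 := by
    rw [hr, norm_add_sq_real, real_inner_smul_left, huv, norm_smul, hu, Real.norm_eq_abs,
      mul_one, sq_abs]
    ring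
  have hexpand : (fun q => |⟪q, u⟫| ^ p * ⟪q, r⟫ ^ 2) = fun q => a ^ 2 * (|⟪q, u⟫| ^ p * ⟪q, u⟫ ^ 2)
      + (2 * a * (|⟪q, u⟫| ^ p * (⟪q, u⟫ * ⟪q, v⟫)) + |⟪q, u⟫| ^ p * ⟪q, v⟫ ^ 2) := by
    ext q
    rw [hr, inner_add_right, real_inner_smul_right]
    ring
  rw [hexpand, integral_add, integral_add, integral_const_mul, integral_const_mul,
    integral_abs_rpow_inner_mul_inner_mul_inner_eq_zero hrot p huv,
    integral_abs_rpow_inner_mul_inner_sq_of_inner_eq_zero hp hsphere hrot hu huv, hnorm]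
  · field_simp
    ring
  all_goals
    exact Continuous.integrable_of_ae_norm_eq_one
      (by fun_prop (disch := exact fun _ => Or.inr hp)) hsphere

theorem integral_abs_rpow_inner_mul_sq_pos [NeZero μ] {p : ℝ} (hp : 0 ≤ p)
    (hsphere : ∀ᵐ q ∂μ, ‖q‖ = 1) (hrot : ∀ O : F ≃ₗᵢ[ℝ] F, μ.map O = μ) {e : F}
    (he : ‖e‖ = 1) :
    0 < ∫ q, |⟪q, e⟫| ^ p * ⟪q, e⟫ ^ 2 ∂μ := by
  refine (integral_nonneg fun q => by positivity).lt_of_ne' fun h0 => ?_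
  let b := stdOrthonormalBasis ℝ F
  have hcoord (i) : ∀ᵐ q ∂μ, ⟪b i, q⟫ = 0 := by
    have hi : ∫ q, |⟪q, b i⟫| ^ p * ⟪q, b i⟫ ^ 2 ∂μ = 0 :=
      (integral_comp_inner_eq_of_map_eq hrot (fun x => |x| ^ p * x ^ 2) (by simp [he])).trans h0
    have hint : Integrable (fun q => |⟪q, b i⟫| ^ p * ⟪q, b i⟫ ^ 2) μ :=
      Continuous.integrable_of_ae_norm_eq_one
        (by fun_prop (disch := exact fun _ => Or.inr hp)) hsphere
    filter_upwards [(integral_eq_zero_iff_of_nonneg (fun q => by positivity) hint).mp hi]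
      with q hq
    simp only [Pi.zero_apply, mul_eq_zero, Real.rpow_eq_zero_iff_of_nonneg (abs_nonneg _),
      abs_eq_zero, pow_eq_zero_iff two_ne_zero] at hq
    rw [real_inner_comm]
    tauto
  obtain ⟨q, hq, hq0⟩ := (hsphere.and (ae_all_iff.mpr hcoord)).exists
  have := b.sum_sq_norm_inner_right q
  simp [hq0, hq] at this

end InvariantMeasure

theorem soar_loss_formula_general
    (d : ℕ) (lam : ℝ) (hlam : 0 ≤ lam)
    (μ : Measure (EuclideanSpace ℝ (Fin d))) [IsProbabilityMeasure μ]
    (hsphere : ∀ᵐ q ∂μ, ‖q‖ = 1)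
    (hrot : ∀ O : EuclideanSpace ℝ (Fin d) ≃ₗᵢ[ℝ] EuclideanSpace ℝ (Fin d),
      Measure.map O μ = μ) :
    ∃ C : ℝ, 0 < C ∧ ∀ (r r' : EuclideanSpace ℝ (Fin d)), r ≠ 0 →
      ∫ q, |⟪q, r⟫ / ‖r‖| ^ lam * ⟪q, r'⟫ ^ 2 ∂μ
        = C * (‖r'‖ ^ 2
            + lam * ‖(Submodule.orthogonalProjectionOnto (ℝ ∙ r) r' : EuclideanSpace ℝ (Fin d))‖ ^ 2) := by
  obtain ⟨e, he⟩ := hsphere.exists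
  refine ⟨(∫ q, |⟪q, e⟫| ^ lam * ⟪q, e⟫ ^ 2 ∂μ) / (lam + 1),
    div_pos (integral_abs_rpow_inner_mul_sq_pos hlam hsphere hrot he) (by linarith),
    fun r r' hr => ?_⟩
  set u := ‖r‖⁻¹ • r
  have hu : ‖u‖ = 1 := by simp [u, norm_smul, hr]
  have hqu (q : EuclideanSpace ℝ (Fin d)) : ⟪q, r⟫ / ‖r‖ = ⟪q, u⟫ := by
    simp [u, real_inner_smul_right, div_eq_inv_mul]
  have hproj : ‖(Submodule.orthogonalProjectionOnto (ℝ ∙ r) r' : EuclideanSpace ℝ (Fin d))‖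
      = |⟪u, r'⟫| := by
    rw [Submodule.coe_orthogonalProjectionOnto_apply, Submodule.starProjection_singleton,
      norm_smul]
    have hur : ⟪u, r'⟫ = ⟪r, r'⟫ / ‖r‖ := by simp [u, real_inner_smul_left, div_eq_inv_mul]
    rw [hur, Real.norm_eq_abs, RCLike.ofReal_real_eq_id, id, abs_div, abs_div, abs_pow,
      abs_norm]
    field_simp
  have hconst : ∫ q, |⟪q, u⟫| ^ lam * ⟪q, u⟫ ^ 2 ∂μ = ∫ q, |⟪q, e⟫| ^ lam * ⟪q, e⟫ ^ 2 ∂μ :=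
    integral_comp_inner_eq_of_map_eq hrot (fun x => |x| ^ lam * x ^ 2) (hu.trans he.symm)
  simp_rw [hqu]
  rw [integral_abs_rpow_inner_mul_inner_sq hlam hsphere hrot hu, hproj, sq_abs, hconst]

/-- SOAR loss (Theorem 3.1): for `q` uniform on the unit sphere in `ℝ^d` and the weight
`w(t) = |t|^λ`, there is a constant `C > 0` depending only on `d` and `λ` such that
`E[w(⟪q,r⟫/‖r‖) ⟪q,r'⟫²] = C (‖r'‖² + λ ‖proj_r r'‖²)` for all `r ≠ 0` and `r'`. -/
theorem soar_loss_formula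
    (d : ℕ) (hd : 2 ≤ d) (lam : ℝ) (hlam : 0 ≤ lam)
    (μ : Measure (EuclideanSpace ℝ (Fin d))) [IsProbabilityMeasure μ]
    (hsphere : ∀ᵐ q ∂μ, ‖q‖ = 1)
    (hrot : ∀ O : EuclideanSpace ℝ (Fin d) ≃ₗᵢ[ℝ] EuclideanSpace ℝ (Fin d),
      Measure.map O μ = μ) :
    ∃ C : ℝ, 0 < C ∧ ∀ (r r' : EuclideanSpace ℝ (Fin d)), r ≠ 0 →
      ∫ q, |⟪q, r⟫ / ‖r‖| ^ lam * ⟪q, r'⟫ ^ 2 ∂μ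
        = C * (‖r'‖ ^ 2
            + lam * ‖(Submodule.orthogonalProjectionOnto (ℝ ∙ r) r' : EuclideanSpace ℝ (Fin d))‖ ^ 2) :=
  soar_loss_formula_general d lam hlam μ hsphere hrot
end
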